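/- arXiv:1908.11679 — 2 statements merged into one kernel-verified Lean document; each statement's English description precedes it below -/
import Mathlib

section
/- Let λ be a partition of n with largest part λ₁, and let μ be a partition of n − λ₁ + 2 such that ᵗλ and ᵗμ are 2-transverse. Then μ is obtained from λ* = [λ₂, λ₃, …, λ_k] by adding a 2-hook. -/
/-- A partition, encoded as a weakly decreasing function `ℕ → ℕ` (0-indexed parts)
that is eventually zero. -/
def IsPartition (f : ℕ → ℕ) : Prop := Antitone f ∧ ∃ N, ∀ i, N ≤ i → f i = 0

/-- The conjugate (transpose) partition: `conj f i = #{j : f j ≥ i+1}` (0-indexed,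
so `conj f i` is the (i+1)-st column length, i.e. ᵗλ_{i+1}). -/
noncomputable def conj (f : ℕ → ℕ) (i : ℕ) : ℕ := Nat.card {j : ℕ // i + 1 ≤ f j}

/-- Two partitions are close if corresponding parts differ by at most 1. -/
def Close (f g : ℕ → ℕ) : Prop := ∀ i, f i ≤ g i + 1 ∧ g i ≤ f i + 1

/-- Two partitions are 2-transverse: they are close and every positive common part
(at equal indices) occurs an even number of times. -/
def Transverse2 (f g : ℕ → ℕ) : Prop :=
  Close f g ∧ ∀ p, 0 < p → Even (Nat.card {i : ℕ // f i = p ∧ g i = p})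

/-- The size |λ| of a partition: the (finite) sum of its parts. -/
noncomputable def psize (f : ℕ → ℕ) : ℕ := ∑ᶠ i, f i

/-- Prepend a part to a partition. -/
def pcons (a : ℕ) (f : ℕ → ℕ) : ℕ → ℕ
  | 0 => a
  | (i+1) => f i

/-- `RemoveTwoHook ν μ` : the partition μ is obtained from ν by removing a 2-hook,
either two adjacent blocks in one row (type (1²)) or two adjacent blocks in one
column (type (2)), the result still being a Young diagram. -/
def RemoveTwoHook (ν μ : ℕ → ℕ) : Prop :=
  IsPartition ν ∧ IsPartition μ ∧
  ((∃ i, μ i + 2 = ν i ∧ ∀ j, j ≠ i → μ j = ν j) ∨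
   (∃ i, μ i + 1 = ν i ∧ μ (i+1) + 1 = ν (i+1) ∧ ∀ j, j ≠ i → j ≠ i + 1 → μ j = ν j))

lemma conj_eq_ncard (f : ℕ → ℕ) (i : ℕ) : conj f i = {j : ℕ | i + 1 ≤ f j}.ncard := by
  rw [conj, ← Nat.card_coe_set_eq]; rfl

lemma conj_set_finite (f : ℕ → ℕ) (N : ℕ) (hN : ∀ j, N ≤ j → f j = 0) (i : ℕ) :
    {j : ℕ | i + 1 ≤ f j}.Finite := by
  apply Set.Finite.subset (Set.finite_Iio N)
  intro j hj
  simp only [Set.mem_setOf_eq] at hj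
  simp only [Set.mem_Iio]
  by_contra h
  push_neg at h
  have := hN j h
  omega

lemma conj_le (f : ℕ → ℕ) (hf : Antitone f) {i j : ℕ} (h : f j ≤ i) : conj f i ≤ j := by
  rw [conj_eq_ncard]
  calc {k : ℕ | i + 1 ≤ f k}.ncard ≤ ((Finset.range j : Finset ℕ) : Set ℕ).ncard := by
        apply Set.ncard_le_ncard _ (by simp only [Finset.coe_range]; exact Set.finite_Iio j)
        intro k hk
        simp only [Set.mem_setOf_eq] at hk
        simp only [Finset.coe_range, Set.mem_Iio]
        by_contra hc
        push_neg at hc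
        have := hf (show j ≤ k by omega)
        omega
    _ = j := by rw [Finset.coe_range, ← Finset.coe_Iio, Set.ncard_coe_finset, Nat.card_Iio]

lemma conj_ge (f : ℕ → ℕ) (hf : Antitone f) (N : ℕ) (hN : ∀ j, N ≤ j → f j = 0)
    {i j : ℕ} (h : i + 1 ≤ f j) : j + 1 ≤ conj f i := by
  rw [conj_eq_ncard]
  calc j + 1 = ((Finset.range (j+1) : Finset ℕ) : Set ℕ).ncard := by
        rw [Finset.coe_range, ← Finset.coe_Iio, Set.ncard_coe_finset, Nat.card_Iio]
    _ ≤ _ := by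
        apply Set.ncard_le_ncard _ (conj_set_finite f N hN i)
        intro k hk
        simp only [Finset.coe_range, Set.mem_Iio] at hk
        have := hf (show k ≤ j by omega)
        simp only [Set.mem_setOf_eq]
        omega

lemma conj_eq_zero (f : ℕ → ℕ) (hf : Antitone f) {i : ℕ} (h : f 0 ≤ i) : conj f i = 0 := by
  rw [conj_eq_ncard]
  convert Set.ncard_empty ℕ using 2
  ext k
  simp only [Set.mem_setOf_eq, Set.mem_empty_iff_false, iff_false]
  have := hf (Nat.zero_le k)
  omega

lemma conj_shift (f : ℕ → ℕ) (N : ℕ) (hN : ∀ j, N ≤ j → f j = 0) {i : ℕ} (h : i + 1 ≤ f 0) :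
    conj f i = conj (fun j => f (j + 1)) i + 1 := by
  rw [conj_eq_ncard, conj_eq_ncard]
  have hset : {j : ℕ | i + 1 ≤ f j} =
      insert 0 ((fun j => j + 1) '' {j : ℕ | i + 1 ≤ f (j + 1)}) := by
    ext k
    simp only [Set.mem_setOf_eq, Set.mem_insert_iff, Set.mem_image]
    constructor
    · intro hk
      cases k with
      | zero => left; rfl
      | succ m => right; exact ⟨m, hk, rfl⟩
    · rintro (rfl | ⟨m, hm, rfl⟩)
      · exact h
      · exact hm
  rw [hset, Set.ncard_insert_of_notMem (by simp)
        (Set.Finite.image _ (conj_set_finite (fun j => f (j+1)) N (fun j hj => hN _ (by omega)) i)),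
      Set.ncard_image_of_injective _ (fun a b => by omega)]

lemma conj_insert (g : ℕ → ℕ) (N : ℕ) (hN : ∀ j, N ≤ j → g j = 0)
    (μ : ℕ → ℕ) (r : ℕ) (hr : μ r = g r + 1) (hother : ∀ j, j ≠ r → (i + 1 ≤ μ j ↔ i + 1 ≤ g j))
    (hi : g r = i) : conj μ i = conj g i + 1 := by
  rw [conj_eq_ncard, conj_eq_ncard]
  have hset : {j : ℕ | i + 1 ≤ μ j} = insert r {j : ℕ | i + 1 ≤ g j} := by
    ext k
    simp only [Set.mem_setOf_eq, Set.mem_insert_iff]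
    rcases eq_or_ne k r with rfl | hk
    · simp [hr, hi]
    · rw [hother k hk]; tauto
  rw [hset, Set.ncard_insert_of_notMem (by simp [Set.mem_setOf_eq]; omega)
        (conj_set_finite g N hN i)]

lemma conj_congr (μ g : ℕ → ℕ) (i : ℕ) (h : ∀ j, i + 1 ≤ μ j ↔ i + 1 ≤ g j) :
    conj μ i = conj g i := by
  rw [conj_eq_ncard, conj_eq_ncard]
  congr 1
  ext k
  exact h k

lemma conj_strict (f : ℕ → ℕ) (N : ℕ) (hN : ∀ j, N ≤ j → f j = 0)
    {c1 c2 m : ℕ} (h2 : c2 < c1) (hm : f m = c1) : conj f c1 < conj f c2 := by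
  rw [conj_eq_ncard, conj_eq_ncard]
  apply Set.ncard_lt_ncard _ (conj_set_finite f N hN c2)
  constructor
  · intro k hk
    simp only [Set.mem_setOf_eq] at *
    omega
  · intro hsub
    have := hsub (show m ∈ {j : ℕ | c2 + 1 ≤ f j} by simp only [Set.mem_setOf_eq]; omega)
    simp only [Set.mem_setOf_eq] at this
    omega

lemma close_to_rows (f μ : ℕ → ℕ) (hf : Antitone f) (hμ : Antitone μ)
    (Nf : ℕ) (hNf : ∀ j, Nf ≤ j → f j = 0)
    (hc : Close (conj f) (conj μ)) : ∀ j, f (j + 1) ≤ μ j := by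
  intro j
  by_contra h
  push_neg at h
  set i := μ j with hi
  have h1 : j + 2 ≤ conj f i := conj_ge f hf Nf hNf (by have := hf (show j ≤ j+1 by omega); omega)
  have h2 : conj μ i ≤ j := conj_le μ hμ (le_refl _)
  have := (hc i).1
  omega

lemma psize_eq_sum (f : ℕ → ℕ) (N : ℕ) (hN : ∀ j, N ≤ j → f j = 0) :
    psize f = ∑ i ∈ Finset.range N, f i := by
  apply finsum_eq_sum_of_support_subset
  intro j hj
  simp only [Function.mem_support] at hj
  simp only [Finset.coe_range, Set.mem_Iio]
  by_contra h
  exact hj (hN j (by omega))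

lemma sum_two_cases (e : ℕ → ℕ) (N : ℕ) (hN : ∀ j, N ≤ j → e j = 0)
    (hsum : ∑ i ∈ Finset.range N, e i = 2) :
    (∃ r, e r = 2 ∧ ∀ j, j ≠ r → e j = 0) ∨
    (∃ r1 r2, r1 < r2 ∧ e r1 = 1 ∧ e r2 = 1 ∧ ∀ j, j ≠ r1 → j ≠ r2 → e j = 0) := by
  set s := (Finset.range N).filter (fun i => e i ≠ 0) with hs
  have hsum' : ∑ i ∈ s, e i = 2 := by
    rw [hs, Finset.sum_filter_ne_zero]; exact hsum
  have hzero : ∀ j, j ∉ s → e j = 0 := by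
    intro j hj
    rcases lt_or_ge j N with h | h
    · by_contra hne
      exact hj (Finset.mem_filter.2 ⟨Finset.mem_range.2 h, hne⟩)
    · exact hN j h
  have hcard : s.card ≤ 2 := by
    calc s.card = ∑ i ∈ s, 1 := by simp
      _ ≤ ∑ i ∈ s, e i := Finset.sum_le_sum (fun i hi => by
          have := (Finset.mem_filter.1 hi).2; omega)
      _ = 2 := hsum'
  have hcard1 : 1 ≤ s.card := by
    by_contra h
    push_neg at h
    interval_cases h' : s.card
    · rw [Finset.card_eq_zero.1 h'] at hsum'; simp at hsum'
  interval_cases h : s.card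
  · obtain ⟨a, ha⟩ := Finset.card_eq_one.1 h
    rw [ha, Finset.sum_singleton] at hsum'
    left
    refine ⟨a, hsum', fun j hj => hzero j (by rw [ha]; simp [hj])⟩
  · obtain ⟨a, b, hab, hs2⟩ := Finset.card_eq_two.1 h
    rw [hs2, Finset.sum_insert (by simp [hab]), Finset.sum_singleton] at hsum'
    have hea : e a ≠ 0 := (Finset.mem_filter.1 (by rw [hs2] at *; exact Finset.mem_insert_self a {b} : a ∈ s)).2
    have heb : e b ≠ 0 := (Finset.mem_filter.1 (show b ∈ s by rw [hs2]; simp)).2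
    have h1 : e a = 1 := by omega
    have h2 : e b = 1 := by omega
    right
    rcases lt_or_gt_of_ne hab with hlt | hgt
    · exact ⟨a, b, hlt, h1, h2, fun j hj1 hj2 => hzero j (by rw [hs2]; simp [hj1, hj2])⟩
    · exact ⟨b, a, hgt, h2, h1, fun j hj1 hj2 => hzero j (by rw [hs2]; simp [hj1, hj2])⟩

/-- If |μ| = n − λ₁ + 2 and ᵗλ, ᵗμ are 2-transverse, then μ is obtained from λ*
by adding a 2-hook. -/
theorem stmt7 (f μ : ℕ → ℕ) (hf : IsPartition f) (hμ : IsPartition μ)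
    (hsize : psize μ + f 0 = psize f + 2)
    (ht : Transverse2 (conj f) (conj μ)) :
    RemoveTwoHook μ (fun i => f (i + 1)) := by
  obtain ⟨hfA, Nf, hNf⟩ := hf
  obtain ⟨hμA, Nμ, hNμ⟩ := hμ
  set g : ℕ → ℕ := fun i => f (i + 1) with hg
  have hgA : Antitone g := fun a b hab => hfA (by omega)
  have hNg : ∀ j, Nf ≤ j → g j = 0 := fun j hj => hNf _ (by omega)
  have hgpart : IsPartition g := ⟨hgA, Nf, hNg⟩
  have hge : ∀ j, g j ≤ μ j :=
    close_to_rows f μ hfA hμA Nf hNf ht.1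
  -- sum bookkeeping
  set N := max Nf Nμ with hNdef
  have hNf' : ∀ j, N ≤ j → f j = 0 := fun j hj => hNf j (by omega)
  have hNμ' : ∀ j, N ≤ j → μ j = 0 := fun j hj => hNμ j (by omega)
  have hNg' : ∀ j, N ≤ j → g j = 0 := fun j hj => hNg j (by omega)
  have hpf : psize f = ∑ i ∈ Finset.range (N + 1), f i :=
    psize_eq_sum f (N + 1) (fun j hj => hNf' j (by omega))
  have hpμ : psize μ = ∑ i ∈ Finset.range N, μ i := psize_eq_sum μ N hNμ'
  have hsplit : ∑ i ∈ Finset.range (N + 1), f i = (∑ i ∈ Finset.range N, g i) + f 0 := by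
    rw [Finset.sum_range_succ']
  have hsums : ∑ i ∈ Finset.range N, μ i = (∑ i ∈ Finset.range N, g i) + 2 := by
    rw [hpμ, hpf, hsplit] at hsize
    omega
  set e : ℕ → ℕ := fun j => μ j - g j with he
  have hμe : ∀ j, μ j = g j + e j := fun j => by
    have := hge j; simp only [he]; omega
  have hesum : ∑ i ∈ Finset.range N, e i = 2 := by
    have : ∑ i ∈ Finset.range N, μ i
        = (∑ i ∈ Finset.range N, g i) + ∑ i ∈ Finset.range N, e i := by
      rw [← Finset.sum_add_distrib]
      exact Finset.sum_congr rfl (fun i _ => hμe i)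
    omega
  have heN : ∀ j, N ≤ j → e j = 0 := by
    intro j hj; simp only [he]; rw [hNμ' j hj, hNg' j hj]
  refine ⟨⟨hμA, Nμ, hNμ⟩, hgpart, ?_⟩
  rcases sum_two_cases e N heN hesum with ⟨r, hr2, hrest⟩ | ⟨r1, r2, hlt, h1, h2, hrest⟩
  · left
    refine ⟨r, ?_, fun j hj => ?_⟩
    · have := hμe r; omega
    · have := hμe j; rw [hrest j hj] at this; omega
  · -- two rows case
    rcases eq_or_lt_of_le (show r1 + 1 ≤ r2 from hlt) with hadj | hfar
    · right
      refine ⟨r1, ?_, ?_, fun j hj1 hj2 => ?_⟩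
      · have := hμe r1; omega
      · have := hμe (r1 + 1); rw [hadj] at *; omega
      · have := hμe j; rw [hrest j hj1 (by omega)] at this; omega
    · -- contradiction via evenness
      exfalso
      set c1 := g r1 with hc1
      set c2 := g r2 with hc2
      have hμr1 : μ r1 = c1 + 1 := by have := hμe r1; omega
      have hμr2 : μ r2 = c2 + 1 := by have := hμe r2; omega
      have hμot : ∀ j, j ≠ r1 → j ≠ r2 → μ j = g j := by
        intro j hj1 hj2; have := hμe j; rw [hrest j hj1 hj2] at this; omega
      have hc21 : c2 ≤ c1 := hgA (le_of_lt hlt)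
      rcases eq_or_lt_of_le hc21 with hceq | hclt
      · -- c1 = c2 : μ not antitone
        have hmid : μ (r2 - 1) = g (r2 - 1) := hμot _ (by omega) (by omega)
        have hg1 : g (r2 - 1) ≤ c1 := hgA (show r1 ≤ r2 - 1 by omega)
        have hg2 : c2 ≤ g (r2 - 1) := hgA (by omega)
        have := hμA (show r2 - 1 ≤ r2 by omega)
        omega
      · -- c2 < c1
        have hc1f0 : c1 ≤ f 0 := hfA (Nat.zero_le _)
        set p := conj f c2 with hpdef
        have hshift2 : conj f c2 = conj g c2 + 1 := conj_shift f Nf hNf (by omega)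
        have hppos : 0 < p := by rw [hpdef, hshift2]; omega
        have hμc2 : conj μ c2 = conj g c2 + 1 := by
          apply conj_insert g Nf hNg μ r2 (by omega) _ hc2.symm
          intro j hj
          rcases eq_or_ne j r1 with rfl | hj1
          · omega
          · rw [hμot j hj1 hj]
        have hμc1 : conj μ c1 = conj g c1 + 1 := by
          apply conj_insert g Nf hNg μ r1 (by omega) _ hc1.symm
          intro j hj
          rcases eq_or_ne j r2 with rfl | hj2
          · omega
          · rw [hμot j hj hj2]
        have hstrict : conj f c1 < conj f c2 :=
          conj_strict f Nf hNf hclt (show f (r1 + 1) = c1 from hc1.symm)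
        have hsetS : {i : ℕ | conj f i = p ∧ conj μ i = p} = {c2} := by
          ext i
          simp only [Set.mem_setOf_eq, Set.mem_singleton_iff]
          constructor
          · rintro ⟨hfi, hμi⟩
            have hif0 : i + 1 ≤ f 0 := by
              by_contra hco
              rw [conj_eq_zero f hfA (by omega)] at hfi
              omega
            have hshifti : conj f i = conj g i + 1 := conj_shift f Nf hNf hif0
            by_contra hne2
            rcases eq_or_ne i c1 with rfl | hne1
            · rw [hshifti] at hfi
              rw [hμc1] at hμi
              omega
            · have hμi' : conj μ i = conj g i := by
                apply conj_congr
                intro j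
                rcases eq_or_ne j r1 with rfl | hj1
                · omega
                · rcases eq_or_ne j r2 with rfl | hj2
                  · omega
                  · rw [hμot j hj1 hj2]
              omega
          · rintro rfl
            exact ⟨rfl, by rw [hμc2, ← hshift2]⟩
        have hcard : Nat.card {i : ℕ // conj f i = p ∧ conj μ i = p} = 1 := by
          have h1 : Nat.card {i : ℕ // conj f i = p ∧ conj μ i = p}
              = {i : ℕ | conj f i = p ∧ conj μ i = p}.ncard := by
            rw [← Nat.card_coe_set_eq]; rfl
          rw [h1, hsetS, Set.ncard_singleton]
        have heven := ht.2 p hppos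
        rw [hcard] at heven
        exact Nat.not_even_one heven
end

section
/- Let λ be a partition of n with λ₁ = λ₂ (largest part repeated at least twice), and let n' = n + 1 − λ₁. Then the unique partition μ' of n' such that ᵗλ and ᵗμ' are 2-transverse is μ' = [λ₂ + 1, λ₃, λ₄, …, λ_k]. -/
open Finset

lemma Finset.exists_eq_add_one_of_sum_eq_add_one {ι : Type*} {s : Finset ι} {a b : ι → ℕ}
    (hle : ∀ i ∈ s, b i ≤ a i) (hsum : ∑ i ∈ s, a i = ∑ i ∈ s, b i + 1) :
    ∃ i₀ ∈ s, a i₀ = b i₀ + 1 ∧ ∀ i ∈ s, i ≠ i₀ → a i = b i := by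
  classical
  obtain ⟨i₀, hi₀, hlt⟩ := exists_lt_of_sum_lt (s := s) (f := b) (g := a) (by omega)
  set b' := Function.update b i₀ (b i₀ + 1)
  have hle' : ∀ i ∈ s, b' i ≤ a i := fun i hi => by
    rcases eq_or_ne i i₀ with rfl | hne
    · simpa [b'] using hlt
    · simpa [b', hne] using hle i hi
  have hsum' : ∑ i ∈ s, b' i = ∑ i ∈ s, a i := by
    rw [sum_update_of_mem hi₀, hsum, ← add_sum_erase s b hi₀, sdiff_singleton_eq_erase]
    ring
  have heq := (sum_eq_sum_iff_of_le hle').1 hsum'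
  exact ⟨i₀, hi₀, by simpa [b'] using (heq i₀ hi₀).symm,
    fun i hi hne => by simpa [b', hne] using (heq i hi).symm⟩

lemma not_transverse2_of_unique_common_part {c d : ℕ → ℕ} {i₀ : ℕ} (hpos : 0 < c i₀)
    (heq : c i₀ = d i₀) (huniq : ∀ i, c i = d i → 0 < c i → i = i₀) : ¬ Transverse2 c d := by
  intro ht
  have hone : Nat.card {i : ℕ // c i = c i₀ ∧ d i = c i₀} = 1 :=
    Nat.card_eq_one_iff_exists.2 ⟨⟨i₀, rfl, heq.symm⟩, fun ⟨i, hc, hd⟩ =>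
      Subtype.ext (huniq i (hc.trans hd.symm) (hc ▸ hpos))⟩
  exact Nat.not_even_one (hone ▸ ht.2 _ hpos)

-- `d` is `c` with a box removed from each of its first `F` columns and a box added in column `F`,
-- written without truncated subtraction.
lemma transverse2_of_add_ite_eq {c d : ℕ → ℕ} {F : ℕ} (hc : ∀ i, F ≤ i → c i = 0)
    (h : ∀ i, d i + (if i < F then 1 else 0) = c i + if i = F then 1 else 0) :
    Transverse2 c d := by
  refine ⟨fun i => ?_, fun p hp => ?_⟩
  · have := h i
    have := hc i
    split_ifs at * <;> omega
  · have : IsEmpty {i : ℕ // c i = p ∧ d i = p} := ⟨fun ⟨i, hci, hdi⟩ => by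
      have := h i
      have := hc i
      split_ifs at * <;> omega⟩
    rw [Nat.card_of_isEmpty]
    exact Even.zero

section

variable {f μ : ℕ → ℕ}

lemma isPartition_comp_add (hf : IsPartition f) (k : ℕ) : IsPartition (fun i => f (i + k)) := by
  obtain ⟨hanti, N, hN⟩ := hf
  exact ⟨fun i j hij => hanti (by omega), N, fun i hi => hN _ (by omega)⟩

lemma isPartition_pcons (hf : IsPartition f) {a : ℕ} (ha : f 0 ≤ a) :
    IsPartition (pcons a f) := by
  obtain ⟨hanti, N, hN⟩ := hf
  refine ⟨antitone_nat_of_succ_le ?_, N + 1, ?_⟩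
  · rintro (_ | i)
    exacts [ha, hanti i.le_succ]
  · rintro (_ | i) hi
    exacts [by omega, hN i (by omega)]

lemma conj_eq_card_filter {N : ℕ} (hN : ∀ i, N ≤ i → f i = 0) (j : ℕ) :
    conj f j = #{k ∈ range N | j < f k} := by
  rw [conj, ← Nat.card_eq_finsetCard]
  refine Nat.card_congr (Equiv.subtypeEquivRight fun k => ?_)
  simp only [mem_filter, mem_range]
  refine ⟨fun hk => ⟨?_, hk⟩, And.right⟩
  by_contra hNk
  have := hN k (by omega)
  omega

lemma IsPartition.conj_le_iff (hf : IsPartition f) {i j : ℕ} : conj f j ≤ i ↔ f i ≤ j := by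
  obtain ⟨hanti, N, hN⟩ := hf
  rw [conj_eq_card_filter hN]
  constructor
  · intro hcard
    by_contra! hlt
    have hsub : range (i + 1) ⊆ {k ∈ range N | j < f k} := fun k hk => by
      have hki := Nat.le_of_lt_succ (mem_range.1 hk)
      have := hanti hki
      have : i < N := by by_contra; have := hN i (by omega); omega
      simp only [mem_filter, mem_range]
      omega
    have := card_le_card hsub
    rw [card_range] at this
    omega
  · intro hle
    have hsub : {k ∈ range N | j < f k} ⊆ range i := fun k hk => by
      simp only [mem_filter, mem_range] at hk ⊢
      by_contra!
      have := hanti this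
      omega
    simpa using card_le_card hsub

lemma IsPartition.conj_eq_zero_iff (hf : IsPartition f) {j : ℕ} : conj f j = 0 ↔ f 0 ≤ j := by
  rw [← Nat.le_zero, hf.conj_le_iff]

lemma isPartition_conj (hf : IsPartition f) : IsPartition (conj f) := by
  refine ⟨fun j j' hj => ?_, f 0, fun j hj => hf.conj_eq_zero_iff.2 hj⟩
  rw [hf.conj_le_iff]
  exact (hf.conj_le_iff.1 le_rfl).trans hj

lemma IsPartition.conj_conj (hf : IsPartition f) : conj (conj f) = f :=
  funext fun i => eq_of_forall_ge_iff fun j => by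
    rw [(isPartition_conj hf).conj_le_iff, hf.conj_le_iff]

lemma psize_eq_sum_range {N : ℕ} (hN : ∀ i, N ≤ i → f i = 0) :
    psize f = ∑ i ∈ range N, f i := by
  refine finsum_eq_sum_of_support_subset _ fun i hi => ?_
  by_contra h
  exact hi (hN i (by simpa using h))

lemma IsPartition.psize_conj (hf : IsPartition f) : psize (conj f) = psize f := by
  obtain ⟨N, hN⟩ := hf.2
  rw [psize_eq_sum_range fun j hj => hf.conj_eq_zero_iff.2 hj, psize_eq_sum_range hN]
  simp only [conj_eq_card_filter hN, card_filter]
  rw [sum_comm]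
  refine sum_congr rfl fun k _ => ?_
  have : {j ∈ range (f 0) | j < f k} = range (f k) := by
    ext j
    have := hf.1 (Nat.zero_le k)
    simp only [mem_filter, mem_range]
    omega
  rw [← card_filter, this, card_range]

lemma IsPartition.psize_pcons (hf : IsPartition f) (a : ℕ) : psize (pcons a f) = a + psize f := by
  obtain ⟨_, N, hN⟩ := hf
  have hN' : ∀ i, N + 1 ≤ i → pcons a f i = 0 := by
    rintro (_ | i) hi
    exacts [by omega, hN i (by omega)]
  rw [psize_eq_sum_range hN', psize_eq_sum_range hN, sum_range_succ', add_comm]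
  rfl

lemma IsPartition.conj_pcons (hf : IsPartition f) {a : ℕ} (ha : f 0 ≤ a) (j : ℕ) :
    conj (pcons a f) j = conj f j + if j < a then 1 else 0 := by
  refine eq_of_forall_ge_iff fun i => ?_
  have hzero := hf.conj_eq_zero_iff (j := j)
  rw [(isPartition_pcons hf ha).conj_le_iff]
  rcases i with _ | i
  · simp only [pcons]
    split_ifs <;> omega
  · rw [pcons, ← hf.conj_le_iff]
    split_ifs <;> omega

def removeFirstRowAddBox (f : ℕ → ℕ) : ℕ → ℕ := pcons (f 1 + 1) fun i => f (i + 2)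

lemma pcons_pcons_comp_add_two (f : ℕ → ℕ) : pcons (f 0) (pcons (f 1) fun i => f (i + 2)) = f :=
  funext fun i => by rcases i with _ | _ | i <;> rfl

lemma isPartition_removeFirstRowAddBox (hf : IsPartition f) :
    IsPartition (removeFirstRowAddBox f) :=
  isPartition_pcons (isPartition_comp_add hf 2) (Nat.le_succ_of_le (hf.1 one_le_two))

lemma psize_removeFirstRowAddBox (hf : IsPartition f) :
    psize (removeFirstRowAddBox f) + f 0 = psize f + 1 := by
  have htail := isPartition_comp_add hf 2
  have hsplit : psize f = f 0 + (f 1 + psize fun i => f (i + 2)) := by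
    rw [← congrArg psize (pcons_pcons_comp_add_two f),
      (isPartition_pcons htail (hf.1 one_le_two)).psize_pcons, htail.psize_pcons]
  rw [removeFirstRowAddBox, htail.psize_pcons, hsplit]
  ring

lemma conj_removeFirstRowAddBox_add_ite (hf : IsPartition f) (h12 : f 0 = f 1) (j : ℕ) :
    conj (removeFirstRowAddBox f) j + (if j < f 0 then 1 else 0) =
      conj f j + if j = f 0 then 1 else 0 := by
  have htail := isPartition_comp_add hf 2
  have h21 : f 2 ≤ f 1 := hf.1 (by omega)
  have hcf := congrArg (conj · j) (pcons_pcons_comp_add_two f)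
  rw [(isPartition_pcons htail h21).conj_pcons h12.ge, htail.conj_pcons h21] at hcf
  rw [removeFirstRowAddBox, htail.conj_pcons (Nat.le_succ_of_le h21), ← hcf]
  split_ifs <;> omega

lemma conj_add_ite_eq_of_transverse2 (hf : IsPartition f) (hμ : IsPartition μ)
    (hsize : psize μ + f 0 = psize f + 1) (ht : Transverse2 (conj f) (conj μ)) (j : ℕ) :
    conj μ j + (if j < f 0 then 1 else 0) = conj f j + if j = f 0 then 1 else 0 := by
  set F := f 0
  set s := range (F + μ 0 + 1)
  have hc0 : ∀ i, F ≤ i → conj f i = 0 := fun i => hf.conj_eq_zero_iff.2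
  have hout : ∀ i ∉ s, F < i ∧ conj μ i = 0 := fun i hi => by
    simp only [s, mem_range, not_lt] at hi
    exact ⟨by omega, hμ.conj_eq_zero_iff.2 (by omega)⟩
  have hle : ∀ i ∈ s, conj f i ≤ conj μ i + if i < F then 1 else 0 := fun i _ => by
    have := (ht.1 i).1
    have := hc0 i
    split_ifs <;> omega
  have hsum : ∑ i ∈ s, (conj μ i + if i < F then 1 else 0) = ∑ i ∈ s, conj f i + 1 := by
    have hcard : #{i ∈ s | i < F} = F := by
      rw [show {i ∈ s | i < F} = range F by ext; simp [s]; omega, card_range]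
    rw [sum_add_distrib, sum_boole, hcard,
      ← psize_eq_sum_range fun i hi => (hout i (by simpa [s] using hi)).2,
      ← psize_eq_sum_range fun i hi => hc0 i (by simp at hi; omega), hμ.psize_conj, hf.psize_conj]
    simpa using hsize
  obtain ⟨i₀, hi₀s, hi₀, hrest⟩ := exists_eq_add_one_of_sum_eq_add_one hle hsum
  have hoff : ∀ i, i ≠ i₀ → conj μ i + (if i < F then 1 else 0) = conj f i := fun i hne => by
    by_cases hi : i ∈ s
    · exact hrest i hi hne
    · obtain ⟨hFi, hμi⟩ := hout i hi
      simp [hμi, hc0 i hFi.le, not_lt.2 hFi.le]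
  -- a box added back in a column of `f` would be the only common part of `conj f` and `conj μ`
  have hFi₀ : F ≤ i₀ := by
    by_contra! hlt
    refine not_transverse2_of_unique_common_part (i₀ := i₀) ?_ ?_ ?_ ht
    · rw [pos_iff_ne_zero, Ne, hf.conj_eq_zero_iff]; omega
    · rw [if_pos hlt] at hi₀; omega
    · intro i heq hpos
      by_contra hne
      have := hoff i hne
      have := hc0 i
      split_ifs at * <;> omega
  obtain rfl : i₀ = F := by
    by_contra hne
    have hF := hoff F (Ne.symm hne)
    have hanti := (isPartition_conj hμ).1 hFi₀
    rw [if_neg (lt_irrefl F), hc0 F le_rfl] at hF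
    rw [if_neg (by omega), hc0 i₀ hFi₀] at hi₀
    omega
  rcases eq_or_ne j F with rfl | hne
  · simpa using hi₀
  · rw [hoff j hne, if_neg hne, add_zero]

end

/-- If λ₁ = λ₂, the unique partition μ' of n + 1 − λ₁ with ᵗλ and ᵗμ'
2-transverse is μ' = [λ₂+1, λ₃, λ₄, …]. -/
theorem stmt13 (f : ℕ → ℕ) (hf : IsPartition f) (h12 : f 0 = f 1) :
    IsPartition (pcons (f 1 + 1) (fun i => f (i + 2))) ∧
    psize (pcons (f 1 + 1) (fun i => f (i + 2))) + f 0 = psize f + 1 ∧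
    Transverse2 (conj f) (conj (pcons (f 1 + 1) (fun i => f (i + 2)))) ∧
    ∀ μ : ℕ → ℕ, IsPartition μ → psize μ + f 0 = psize f + 1 →
      Transverse2 (conj f) (conj μ) → μ = pcons (f 1 + 1) (fun i => f (i + 2)) := by
  have hg := isPartition_removeFirstRowAddBox hf
  have hconj := conj_removeFirstRowAddBox_add_ite hf h12
  refine ⟨hg, psize_removeFirstRowAddBox hf,
    transverse2_of_add_ite_eq (fun i => hf.conj_eq_zero_iff.2) hconj, fun μ hμ hsize ht => ?_⟩
  have hμconj := conj_add_ite_eq_of_transverse2 hf hμ hsize ht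
  show μ = removeFirstRowAddBox f
  rw [← hμ.conj_conj, ← hg.conj_conj]
  congr 1
  funext i
  have := hconj i
  have := hμconj i
  omega
end
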